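/- (Theorem 2.2, fourth identity, q-case: joint moments of the negative q-trinomial distribution of the first kind.) Let n ≥ 1 be a natural number, α₁, α₂ ∈ (0,1) and m₁, m₂ ∈ ℕ. Then the double series over all pairs (w₁,w₂) ∈ ℕ × ℕ of ( [w₁]_{m₁,q⁻¹} · [w₂]_{m₂,q⁻¹} / ∏_{i=1}^{m₁} (1 + α₂·q^{n+w₂+i−1}) ) · g(w₁,w₂) converges, with sum equal to α₁^{m₁} · α₂^{m₂} · [n+m₁+m₂−1]_{m₁+m₂,q}. -/

import Mathlib

open Finset

/-- q-integer `[k]_q = (1 - q^k)/(1 - q)`. -/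
noncomputable def qInt (q : ℝ) (k : ℤ) : ℝ := (1 - q ^ k) / (1 - q)

/-- q-factorial `[n]_q! = ∏_{i=1}^n [i]_q`. -/
noncomputable def qFact (q : ℝ) (n : ℕ) : ℝ := ∏ i ∈ Finset.Icc 1 n, qInt q (i : ℤ)

/-- q-binomial coefficient `C_q(n,k)`. -/
noncomputable def qBinom (q : ℝ) (n k : ℕ) : ℝ := qFact q n / (qFact q k * qFact q (n - k))

/-- q-falling factorial `[u]_{m,q} = ∏_{i=1}^m [u-i+1]_q`. -/
noncomputable def qFall (q : ℝ) (u : ℤ) (m : ℕ) : ℝ := ∏ i ∈ Finset.Icc 1 m, qInt q (u - (i : ℤ) + 1)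

/-- `[k]_{q⁻¹} = q^{1-k} · [k]_q`. -/
noncomputable def qIntInv (q : ℝ) (k : ℤ) : ℝ := q ^ (1 - k) * qInt q k

/-- `[u]_{m,q⁻¹} = ∏_{i=1}^m [u-i+1]_{q⁻¹}`. -/
noncomputable def qFallInv (q : ℝ) (u : ℤ) (m : ℕ) : ℝ := ∏ i ∈ Finset.Icc 1 m, qIntInv q (u - (i : ℤ) + 1)

/-- `b(k) = k(k-1)/2`. -/
def bb (k : ℕ) : ℕ := k * (k - 1) / 2

/-- `⟨1 ⊕ α⟩_m = ∏_{i=1}^m (1 + α q^{i-1})`. -/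
noncomputable def oplus (q α : ℝ) (m : ℕ) : ℝ := ∏ i ∈ Finset.Icc 1 m, (1 + α * q ^ (i - 1))

/-- `⟨1 ⊖ β⟩_m = ∏_{i=1}^m (1 - β q^{i-1})`. -/
noncomputable def ominus (q β : ℝ) (m : ℕ) : ℝ := ∏ i ∈ Finset.Icc 1 m, (1 - β * q ^ (i - 1))

/-- q-trinomial coefficient `T_q(n; x₁, x₂)`. -/
noncomputable def qTri (q : ℝ) (n x1 x2 : ℕ) : ℝ :=
  qFact q n / (qFact q x1 * qFact q x2 * qFact q (n - x1 - x2))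

/-- pmf of the negative q-trinomial distribution of the first kind. -/
noncomputable def gpmf (q a1 a2 : ℝ) (n w1 w2 : ℕ) : ℝ :=
  (qFact q (n + w1 + w2 - 1) / (qFact q w1 * qFact q w2 * qFact q (n - 1))) *
    a1 ^ w1 * a2 ^ w2 * q ^ (bb w1 + bb w2) /
    (oplus q a1 (n + w1 + w2) * oplus q a2 (n + w2))

/-! The pmf factors as `g(w₁, w₂) = p^{α₁}_{n+w₂}(w₁) · p^{α₂}_n(w₂)`, where
`p^α_n(w) = C_q(n-1+w, w) q^{b(w)} α^w / ⟨1 ⊕ α⟩_{n+w}` is the negative `q`-binomial law.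
Each `p^α_n` has total mass `1`: its partial sum up to `K` is
`∑_{k ≤ K} C_q(n+K, k) q^{b(k)} α^k / ⟨1 ⊕ α⟩_{n+K}`, and by the Cauchy binomial theorem
`⟨1 ⊕ α⟩_M = ∑_{k ≤ M} C_q(M, k) q^{b(k)} α^k` the missing `n` terms are `O(α^K)`.

For the moments, `[w]_{m,q⁻¹}` vanishes for `w < m`, and for `w = m + v` it equals
`[m+v]_q! / ([v]_q! q^{mv + b(m)})`. Substituting `wᵢ = mᵢ + vᵢ` therefore turns each summand into
`α₁^{m₁} α₂^{m₂} [n+m₁+m₂-1]_{m₁+m₂,q} · g'(v₁, v₂)`, where `g'` is the pmf with `n` replaced by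
`n + m₁ + m₂`; the extra product in the denominator is exactly what completes `⟨1 ⊕ α₂⟩`. -/

open Filter

lemma bb_succ (k : ℕ) : bb (k + 1) = bb k + k := by
  unfold bb
  rw [Nat.add_sub_cancel, ← Nat.add_mul_div_left _ _ two_pos]
  congr 1
  cases k
  · rfl
  · rw [Nat.add_sub_cancel]; ring

lemma bb_add (a b : ℕ) : bb (a + b) = bb a + bb b + a * b := by
  induction b with
  | zero => simp [bb]
  | succ b ih => rw [← add_assoc, bb_succ, ih, bb_succ]; ring

section QCalculus

variable {q : ℝ}

lemma qInt_natCast (n : ℕ) : qInt q n = (1 - q ^ n) / (1 - q) := by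
  rw [qInt, zpow_natCast]

lemma qInt_add (a b : ℕ) : qInt q ↑(a + b) = qInt q a + q ^ a * qInt q b := by
  rw [qInt_natCast, qInt_natCast, qInt_natCast, ← mul_div_assoc, ← add_div, pow_add]
  ring

lemma one_le_qInt (hq0 : 0 ≤ q) (hq1 : q < 1) {n : ℕ} (hn : n ≠ 0) : 1 ≤ qInt q n := by
  rw [qInt_natCast, le_div_iff₀ (by linarith), one_mul]
  linarith [pow_le_of_le_one hq0 hq1.le hn]

lemma qInt_pos (hq0 : 0 ≤ q) (hq1 : q < 1) {n : ℕ} (hn : n ≠ 0) : 0 < qInt q n :=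
  one_pos.trans_le (one_le_qInt hq0 hq1 hn)

lemma qInt_le_inv_one_sub (hq0 : 0 ≤ q) (hq1 : q < 1) (n : ℕ) : qInt q n ≤ (1 - q)⁻¹ := by
  rw [qInt_natCast, div_eq_mul_inv]
  exact mul_le_of_le_one_left (inv_nonneg.2 (by linarith)) (by linarith [pow_nonneg hq0 n])

@[simp] lemma qFact_zero : qFact q 0 = 1 := by simp [qFact]

lemma qFact_succ (n : ℕ) : qFact q (n + 1) = qFact q n * qInt q ↑(n + 1) := by
  rw [qFact, qFact, prod_Icc_succ_top (by omega)]

lemma one_le_qFact (hq0 : 0 ≤ q) (hq1 : q < 1) (n : ℕ) : 1 ≤ qFact q n := by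
  induction n with
  | zero => simp
  | succ n ih =>
    rw [qFact_succ]
    exact one_le_mul_of_one_le_of_one_le ih (one_le_qInt hq0 hq1 (by omega))

lemma qFact_pos (hq0 : 0 ≤ q) (hq1 : q < 1) (n : ℕ) : 0 < qFact q n :=
  one_pos.trans_le (one_le_qFact hq0 hq1 n)

lemma qFact_add_le (hq0 : 0 ≤ q) (hq1 : q < 1) (k d : ℕ) :
    qFact q (k + d) ≤ qFact q k * (1 - q)⁻¹ ^ d := by
  induction d with
  | zero => simp
  | succ d ih =>
    rw [← add_assoc, qFact_succ, pow_succ, ← mul_assoc]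
    exact mul_le_mul ih (qInt_le_inv_one_sub hq0 hq1 _) (qInt_pos hq0 hq1 (by omega)).le
      (mul_nonneg (qFact_pos hq0 hq1 k).le (pow_nonneg (inv_nonneg.2 (by linarith)) d))

lemma qBinom_nonneg (hq0 : 0 ≤ q) (hq1 : q < 1) (n k : ℕ) : 0 ≤ qBinom q n k := by
  have hF := qFact_pos hq0 hq1
  exact div_nonneg (hF n).le (mul_pos (hF k) (hF _)).le

lemma qBinom_zero_right (hq0 : 0 ≤ q) (hq1 : q < 1) (n : ℕ) : qBinom q n 0 = 1 := by
  simp [qBinom, (qFact_pos hq0 hq1 n).ne']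

lemma qBinom_self (hq0 : 0 ≤ q) (hq1 : q < 1) (n : ℕ) : qBinom q n n = 1 := by
  simp [qBinom, (qFact_pos hq0 hq1 n).ne']

lemma qBinom_succ_succ (hq0 : 0 ≤ q) (hq1 : q < 1) {m i : ℕ} (h : i < m) :
    qBinom q (m + 1) (i + 1) = qBinom q m (i + 1) + q ^ (m - i) * qBinom q m i := by
  obtain ⟨r, rfl⟩ : ∃ r, m = i + r + 1 := ⟨m - i - 1, by omega⟩
  have hsplit : qInt q ↑(i + r + 1 + 1) = qInt q ↑(r + 1) + q ^ (r + 1) * qInt q ↑(i + 1) := by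
    rw [← qInt_add]; congr 2; omega
  rw [qBinom, qBinom, qBinom, show i + r + 1 + 1 - (i + 1) = r + 1 by omega,
    show i + r + 1 - (i + 1) = r by omega, show i + r + 1 - i = r + 1 by omega,
    qFact_succ (i + r + 1), qFact_succ r, qFact_succ i, hsplit]
  have hF := qFact_pos hq0 hq1
  have hr := (qInt_pos hq0 hq1 (n := r + 1) (by omega)).ne'
  have hi := (qInt_pos hq0 hq1 (n := i + 1) (by omega)).ne'
  field_simp

lemma qBinom_add_left_le (hq0 : 0 ≤ q) (hq1 : q < 1) (k d : ℕ) :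
    qBinom q (k + d) k ≤ (1 - q)⁻¹ ^ d := by
  have hk := qFact_pos hq0 hq1 k
  rw [qBinom, Nat.add_sub_cancel_left, div_le_iff₀ (mul_pos hk (qFact_pos hq0 hq1 d))]
  calc qFact q (k + d) ≤ qFact q k * (1 - q)⁻¹ ^ d := qFact_add_le hq0 hq1 k d
    _ ≤ (1 - q)⁻¹ ^ d * (qFact q k * qFact q d) := by
      rw [mul_comm]
      exact mul_le_mul_of_nonneg_left (le_mul_of_one_le_right hk.le (one_le_qFact hq0 hq1 d))
        (pow_nonneg (inv_nonneg.2 (by linarith)) d)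

lemma qFall_succ (u : ℤ) (m : ℕ) : qFall q u (m + 1) = qFall q u m * qInt q (u - m) := by
  rw [qFall, qFall, prod_Icc_succ_top (by omega)]
  congr 2
  push_cast
  ring

lemma qFall_add (u : ℤ) (a b : ℕ) : qFall q u (a + b) = qFall q u a * qFall q (u - a) b := by
  induction b with
  | zero => simp [qFall]
  | succ b ih =>
    rw [← add_assoc, qFall_succ, ih, qFall_succ, mul_assoc]
    congr 3
    push_cast
    ring

lemma qFall_natCast_add (hq0 : 0 ≤ q) (hq1 : q < 1) (M m : ℕ) :
    qFall q ↑(M + m) m = qFact q (M + m) / qFact q M := by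
  induction m generalizing M with
  | zero => simp [qFall, (qFact_pos hq0 hq1 M).ne']
  | succ m ih =>
    rw [qFall_succ, show M + (m + 1) = M + 1 + m by omega, ih, qFact_succ M,
      show ((M + 1 + m : ℕ) : ℤ) - m = ↑(M + 1) by push_cast; ring, div_mul_eq_mul_div]
    exact mul_div_mul_right _ _ (qInt_pos hq0 hq1 (n := M + 1) (by omega)).ne'

lemma qFallInv_succ (u : ℤ) (m : ℕ) :
    qFallInv q u (m + 1) = qFallInv q u m * qIntInv q (u - m) := by
  rw [qFallInv, qFallInv, prod_Icc_succ_top (by omega)]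
  congr 2
  push_cast
  ring

lemma qFallInv_natCast_add (hq0 : 0 < q) (hq1 : q < 1) (m v : ℕ) :
    qFallInv q ↑(m + v) m = qFact q (m + v) / (qFact q v * q ^ (m * v + bb m)) := by
  induction m generalizing v with
  | zero => simp [qFallInv, bb, (qFact_pos hq0.le hq1 v).ne']
  | succ m ih =>
    have hinv : qIntInv q ↑(v + 1) = qInt q ↑(v + 1) / q ^ v := by
      rw [qIntInv, show 1 - ((v + 1 : ℕ) : ℤ) = -(v : ℤ) by push_cast; ring, zpow_neg,
        zpow_natCast, inv_mul_eq_div]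
    rw [qFallInv_succ, show m + 1 + v = m + (v + 1) by omega, ih,
      show ((m + (v + 1) : ℕ) : ℤ) - m = ↑(v + 1) by push_cast; ring, hinv, qFact_succ v,
      show (m + 1) * v + bb (m + 1) = m * (v + 1) + bb m + v by rw [bb_succ]; ring]
    have hv := (qInt_pos hq0.le hq1 (n := v + 1) (by omega)).ne'
    field_simp [(qFact_pos hq0.le hq1 v).ne']
    ring

lemma qFallInv_natCast_of_lt {w m : ℕ} (h : w < m) : qFallInv q w m = 0 := by
  refine prod_eq_zero (i := w + 1) (mem_Icc.2 ⟨by omega, h⟩) ?_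
  simp [qIntInv, qInt]

end QCalculus

section Cauchy

variable {q : ℝ}

lemma oplus_succ (α : ℝ) (m : ℕ) : oplus q α (m + 1) = oplus q α m * (1 + α * q ^ m) := by
  rw [oplus, oplus, prod_Icc_succ_top (by omega), Nat.add_sub_cancel]

@[simp] lemma oplus_zero (α : ℝ) : oplus q α 0 = 1 := by simp [oplus]

lemma one_le_oplus (hq0 : 0 ≤ q) {α : ℝ} (hα : 0 ≤ α) (m : ℕ) : 1 ≤ oplus q α m := by
  unfold oplus
  exact Finset.one_le_prod fun i _ ↦ le_add_of_nonneg_right (by positivity)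

lemma oplus_pos (hq0 : 0 ≤ q) {α : ℝ} (hα : 0 ≤ α) (m : ℕ) : 0 < oplus q α m :=
  one_pos.trans_le (one_le_oplus hq0 hα m)

lemma oplus_add (α : ℝ) (a m : ℕ) :
    oplus q α (a + m) = oplus q α a * ∏ i ∈ Icc 1 m, (1 + α * q ^ (a + i - 1)) := by
  induction m with
  | zero => simp
  | succ m ih =>
    rw [← add_assoc, oplus_succ, ih, prod_Icc_succ_top (by omega),
      show a + (m + 1) - 1 = a + m by omega, mul_assoc]

/-- The `k`-th term of the Cauchy binomial theorem `⟨1 ⊕ α⟩_M = ∑_k C_q(M,k) q^{b(k)} α^k`. -/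
noncomputable def cauchyTerm (q α : ℝ) (M k : ℕ) : ℝ := qBinom q M k * q ^ bb k * α ^ k

lemma cauchyTerm_nonneg (hq0 : 0 ≤ q) (hq1 : q < 1) {α : ℝ} (hα : 0 ≤ α) (M k : ℕ) :
    0 ≤ cauchyTerm q α M k := by
  have hb := qBinom_nonneg hq0 hq1 M k
  unfold cauchyTerm
  positivity

lemma cauchyTerm_zero_right (hq0 : 0 ≤ q) (hq1 : q < 1) (α : ℝ) (M : ℕ) :
    cauchyTerm q α M 0 = 1 := by
  simp [cauchyTerm, qBinom_zero_right hq0 hq1, bb]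

lemma cauchyTerm_succ_self (hq0 : 0 ≤ q) (hq1 : q < 1) (α : ℝ) (M : ℕ) :
    cauchyTerm q α (M + 1) (M + 1) = cauchyTerm q α M M * (α * q ^ M) := by
  simp only [cauchyTerm, qBinom_self hq0 hq1, bb_succ, pow_add]
  ring

lemma cauchyTerm_succ_succ (hq0 : 0 ≤ q) (hq1 : q < 1) (α : ℝ) {M i : ℕ} (h : i < M) :
    cauchyTerm q α (M + 1) (i + 1)
      = cauchyTerm q α M (i + 1) + cauchyTerm q α M i * (α * q ^ M) := by
  have hpow : q ^ (M - i) * q ^ bb (i + 1) = q ^ bb i * q ^ M := by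
    rw [← pow_add, ← pow_add, bb_succ]; congr 1; omega
  simp only [cauchyTerm, qBinom_succ_succ hq0 hq1 h]
  linear_combination (qBinom q M i * α ^ (i + 1)) * hpow

lemma sum_range_cauchyTerm_succ (hq0 : 0 ≤ q) (hq1 : q < 1) (α : ℝ) {M K : ℕ} (h : K < M) :
    ∑ k ∈ range (K + 1 + 1), cauchyTerm q α (M + 1) k
      = (∑ k ∈ range (K + 1), cauchyTerm q α M k) * (1 + α * q ^ M)
        + cauchyTerm q α M (K + 1) := by
  have hshift := sum_range_succ' (cauchyTerm q α M) (K + 1)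
  rw [sum_range_succ, cauchyTerm_zero_right hq0 hq1] at hshift
  rw [sum_range_succ', sum_congr rfl fun i hi ↦
      cauchyTerm_succ_succ hq0 hq1 α ((mem_range.1 hi).trans_le h),
    sum_add_distrib, ← sum_mul, cauchyTerm_zero_right hq0 hq1]
  linear_combination -hshift

theorem oplus_eq_sum_cauchyTerm (hq0 : 0 ≤ q) (hq1 : q < 1) (α : ℝ) (M : ℕ) :
    oplus q α M = ∑ k ∈ range (M + 1), cauchyTerm q α M k := by
  induction M with
  | zero => simp [cauchyTerm_zero_right hq0 hq1]
  | succ M ih =>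
    rcases M with _ | K
    · simp [oplus_succ, sum_range_succ, cauchyTerm_zero_right hq0 hq1,
        cauchyTerm_succ_self hq0 hq1]
    · rw [oplus_succ, ih, sum_range_succ _ (K + 1 + 1), sum_range_succ _ (K + 1),
        sum_range_cauchyTerm_succ hq0 hq1 α (by omega : K < K + 1),
        cauchyTerm_succ_self hq0 hq1 α (K + 1)]
      ring

end Cauchy

section NegQBinom

variable {q α : ℝ}

/-- The law `p^α_{N+1}` of the header, indexed by `N = n - 1` so that no truncated subtraction
occurs. -/
noncomputable def negQBinom (q α : ℝ) (N w : ℕ) : ℝ :=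
  cauchyTerm q α (N + w) w / oplus q α (N + 1 + w)

lemma negQBinom_nonneg (hq0 : 0 ≤ q) (hq1 : q < 1) (hα : 0 ≤ α) (N w : ℕ) :
    0 ≤ negQBinom q α N w :=
  div_nonneg (cauchyTerm_nonneg hq0 hq1 hα _ _) (oplus_pos hq0 hα _).le

lemma sum_range_negQBinom (hq0 : 0 ≤ q) (hq1 : q < 1) (hα : 0 ≤ α) (N K : ℕ) :
    ∑ w ∈ range (K + 1), negQBinom q α N w
      = (∑ k ∈ range (K + 1), cauchyTerm q α (N + 1 + K) k) / oplus q α (N + 1 + K) := by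
  induction K with
  | zero => simp [negQBinom, cauchyTerm_zero_right hq0 hq1]
  | succ K ih =>
    rw [sum_range_succ, ih, negQBinom, show N + (K + 1) = N + 1 + K by omega,
      show N + 1 + (K + 1) = N + 1 + K + 1 by omega, oplus_succ,
      sum_range_cauchyTerm_succ hq0 hq1 α (by omega)]
    have ho := (oplus_pos hq0 hα (N + 1 + K)).ne'
    have hfactor : 1 + α * q ^ (N + 1 + K) ≠ 0 := by positivity
    field_simp

lemma oplus_sub_sum_cauchyTerm (hq0 : 0 ≤ q) (hq1 : q < 1) (α : ℝ) {M K : ℕ} (h : K ≤ M) :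
    oplus q α M - ∑ k ∈ range (K + 1), cauchyTerm q α M k
      = ∑ k ∈ Ico (K + 1) (M + 1), cauchyTerm q α M k := by
  rw [oplus_eq_sum_cauchyTerm hq0 hq1, sum_Ico_eq_sub _ (by omega)]

lemma cauchyTerm_le (hq0 : 0 ≤ q) (hq1 : q < 1) (hα : 0 ≤ α) {M k : ℕ} (h : k ≤ M) :
    cauchyTerm q α M k ≤ (1 - q)⁻¹ ^ (M - k) * α ^ k := by
  obtain ⟨d, rfl⟩ := Nat.exists_eq_add_of_le h
  rw [cauchyTerm, Nat.add_sub_cancel_left]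
  exact mul_le_mul_of_nonneg_right (mul_le_of_le_one_right (qBinom_nonneg hq0 hq1 _ _)
    (pow_le_one₀ hq0 hq1.le) |>.trans (qBinom_add_left_le hq0 hq1 k d)) (pow_nonneg hα k)

lemma oplus_sub_sum_cauchyTerm_le (hq0 : 0 ≤ q) (hq1 : q < 1) (hα0 : 0 ≤ α) (hα1 : α < 1)
    (N K : ℕ) :
    oplus q α (N + 1 + K) - ∑ k ∈ range (K + 1), cauchyTerm q α (N + 1 + K) k
      ≤ (N + 1) * (1 - q)⁻¹ ^ N * α ^ (K + 1) := by
  have hbound : ∀ k ∈ Ico (K + 1) (N + 1 + K + 1),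
      cauchyTerm q α (N + 1 + K) k ≤ (1 - q)⁻¹ ^ N * α ^ (K + 1) := by
    intro k hk
    obtain ⟨hk1, hk2⟩ := mem_Ico.1 hk
    refine (cauchyTerm_le hq0 hq1 hα0 (by omega)).trans (mul_le_mul ?_ ?_ (by positivity)
      (by positivity))
    · exact pow_le_pow_right₀ (one_le_inv₀ (by linarith) |>.2 (by linarith)) (by omega)
    · exact pow_le_pow_of_le_one hα0 hα1.le hk1
  rw [oplus_sub_sum_cauchyTerm hq0 hq1 α (by omega)]
  refine (sum_le_card_nsmul _ _ _ hbound).trans_eq ?_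
  rw [Nat.card_Ico, show N + 1 + K + 1 - (K + 1) = N + 1 by omega, nsmul_eq_mul]
  push_cast
  ring

theorem hasSum_negQBinom (hq0 : 0 ≤ q) (hq1 : q < 1) (hα0 : 0 ≤ α) (hα1 : α < 1) (N : ℕ) :
    HasSum (negQBinom q α N) 1 := by
  rw [hasSum_iff_tendsto_nat_of_nonneg (negQBinom_nonneg hq0 hq1 hα0 N),
    ← tendsto_add_atTop_iff_nat 1]
  set c : ℝ := (N + 1) * (1 - q)⁻¹ ^ N
  have hc : 0 ≤ c := mul_nonneg (by positivity) (pow_nonneg (inv_nonneg.2 (by linarith)) N)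
  have hbounds : ∀ K : ℕ, 1 - c * α ^ (K + 1) ≤ ∑ w ∈ range (K + 1), negQBinom q α N w ∧
      ∑ w ∈ range (K + 1), negQBinom q α N w ≤ 1 := by
    intro K
    have ho := one_le_oplus hq0 hα0 (q := q) (N + 1 + K)
    have htail := oplus_sub_sum_cauchyTerm hq0 hq1 α (M := N + 1 + K) (K := K) (by omega)
    have htail_nonneg := sum_nonneg fun k (_ : k ∈ Ico (K + 1) (N + 1 + K + 1)) ↦
      cauchyTerm_nonneg hq0 hq1 hα0 (N + 1 + K) k
    have htail_le := oplus_sub_sum_cauchyTerm_le hq0 hq1 hα0 hα1 N K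
    have hx : 0 ≤ c * α ^ (K + 1) := mul_nonneg hc (pow_nonneg hα0 _)
    rw [sum_range_negQBinom hq0 hq1 hα0, le_div_iff₀ (by linarith), div_le_one (by linarith)]
    constructor <;> nlinarith
  have hlim : Tendsto (fun K : ℕ ↦ 1 - c * α ^ (K + 1)) atTop (nhds 1) := by
    simpa using ((tendsto_pow_atTop_nhds_zero_of_lt_one hα0 hα1).comp
      (tendsto_add_atTop_nat 1)).const_mul c |>.const_sub 1
  exact tendsto_of_tendsto_of_tendsto_of_le_of_le hlim tendsto_const_nhds
    (fun K ↦ (hbounds K).1) (fun K ↦ (hbounds K).2)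

lemma qFallInv_mul_negQBinom (hq0 : 0 < q) (hq1 : q < 1) (hα : 0 ≤ α) (M m v : ℕ) :
    qFallInv q ↑(m + v) m * negQBinom q α M (m + v)
      = α ^ m * qFall q ↑(M + m) m * negQBinom q α (M + m) v := by
  have hF := qFact_pos hq0.le hq1
  simp only [negQBinom, cauchyTerm, qBinom, Nat.add_sub_cancel]
  rw [qFallInv_natCast_add hq0 hq1, qFall_natCast_add hq0.le hq1,
    show M + (m + v) = M + m + v by omega, show M + 1 + (m + v) = M + m + 1 + v by omega,
    bb_add, pow_add, pow_add, pow_add]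
  field_simp [(hF M).ne', (hF (M + m)).ne', (hF v).ne', (hF (m + v)).ne',
    (oplus_pos hq0.le hα (M + m + 1 + v)).ne']
  ring

lemma negQBinom_div_prod (hq0 : 0 ≤ q) (hq1 : q < 1) (hα : 0 ≤ α) (M m v : ℕ) :
    negQBinom q α M v / ∏ i ∈ Icc 1 m, (1 + α * q ^ (M + 1 + v + i - 1))
      = qFall q ↑(M + m) m / qFall q ↑(M + v + m) m * negQBinom q α (M + m) v := by
  have hF := qFact_pos hq0 hq1
  have hP : oplus q α (M + 1 + v) ≠ 0 := (oplus_pos hq0 hα _).ne'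
  have hprod : ∏ i ∈ Icc 1 m, (1 + α * q ^ (M + 1 + v + i - 1))
      = oplus q α (M + 1 + v + m) / oplus q α (M + 1 + v) := by
    rw [oplus_add, mul_div_cancel_left₀ _ hP]
  simp only [negQBinom, cauchyTerm, qBinom, Nat.add_sub_cancel, qFall_natCast_add hq0 hq1]
  rw [hprod, show M + m + 1 + v = M + 1 + v + m by omega, show M + v + m = M + m + v by omega]
  field_simp [(hF M).ne', (hF (M + m)).ne', (hF v).ne', (hF (M + v)).ne', (hF (M + m + v)).ne',
    (oplus_pos hq0 hα (M + 1 + v + m)).ne']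

end NegQBinom

theorem hasSum_of_nonneg_of_prod_fiberwise {β γ : Type*} {f : β × γ → ℝ} {g : γ → ℝ} {a : ℝ}
    (hf : 0 ≤ f) (hfib : ∀ y, HasSum (fun x ↦ f (x, y)) (g y)) (hg : HasSum g a) : HasSum f a := by
  rw [← (Equiv.prodComm γ β).hasSum_iff]
  have hsum : Summable (f ∘ Equiv.prodComm γ β) := by
    rw [summable_prod_of_nonneg (f := f ∘ Equiv.prodComm γ β) fun _ ↦ hf _]
    exact ⟨fun y ↦ (hfib y).summable, hg.summable.congr fun y ↦ (hfib y).tsum_eq.symm⟩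
  convert hsum.hasSum
  exact hg.unique (hsum.hasSum.prod_fiberwise fun y ↦ hfib y)

section NegQTrinomial

variable {q α1 α2 : ℝ}

lemma gpmf_succ_eq_mul (hq0 : 0 ≤ q) (hq1 : q < 1) (N w1 w2 : ℕ) :
    gpmf q α1 α2 (N + 1) w1 w2 = negQBinom q α1 (N + w2) w1 * negQBinom q α2 N w2 := by
  have hF := qFact_pos hq0 hq1
  simp only [gpmf, negQBinom, cauchyTerm, qBinom, Nat.add_sub_cancel]
  rw [show N + 1 + w1 + w2 - 1 = N + w2 + w1 by omega,
    show N + 1 + w1 + w2 = N + w2 + 1 + w1 by omega, pow_add]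
  field_simp [(hF (N + w2)).ne']

theorem hasSum_gpmf (hq0 : 0 ≤ q) (hq1 : q < 1) (hα1 : 0 ≤ α1) (hα1' : α1 < 1)
    (hα2 : 0 ≤ α2) (hα2' : α2 < 1) (N : ℕ) :
    HasSum (fun w : ℕ × ℕ ↦ gpmf q α1 α2 (N + 1) w.1 w.2) 1 := by
  simp only [gpmf_succ_eq_mul hq0 hq1]
  refine hasSum_of_nonneg_of_prod_fiberwise (fun w ↦ mul_nonneg (negQBinom_nonneg hq0 hq1 hα1 _ _)
    (negQBinom_nonneg hq0 hq1 hα2 _ _)) (fun w2 ↦ ?_) (hasSum_negQBinom hq0 hq1 hα2 hα2' N)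
  simpa using (hasSum_negQBinom hq0 hq1 hα1 hα1' (N + w2)).mul_right (negQBinom q α2 N w2)

lemma qFallInv_mul_qFallInv_div_prod_mul_gpmf (hq0 : 0 < q) (hq1 : q < 1) (hα1 : 0 ≤ α1)
    (hα2 : 0 ≤ α2) (N m1 m2 v1 v2 : ℕ) :
    qFallInv q ↑(m1 + v1) m1 * qFallInv q ↑(m2 + v2) m2
        / (∏ i ∈ Icc 1 m1, (1 + α2 * q ^ (N + 1 + (m2 + v2) + i - 1)))
        * gpmf q α1 α2 (N + 1) (m1 + v1) (m2 + v2)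
      = α1 ^ m1 * α2 ^ m2 * qFall q ↑(N + (m1 + m2)) (m1 + m2)
        * gpmf q α1 α2 (N + (m1 + m2) + 1) v1 v2 := by
  have hfall : qFall q ↑(N + m2 + v2 + m1) m1 ≠ 0 := by
    rw [qFall_natCast_add hq0.le hq1]
    exact (div_pos (qFact_pos hq0.le hq1 _) (qFact_pos hq0.le hq1 _)).ne'
  have hsplit : qFall q ↑(N + (m1 + m2)) (m1 + m2)
      = qFall q ↑(N + m2 + m1) m1 * qFall q ↑(N + m2) m2 := by
    rw [qFall_add, show N + (m1 + m2) = N + m2 + m1 by omega]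
    congr 2
    push_cast
    ring
  calc _ = qFallInv q ↑(m1 + v1) m1 * negQBinom q α1 (N + (m2 + v2)) (m1 + v1)
        * (qFallInv q ↑(m2 + v2) m2 * negQBinom q α2 N (m2 + v2))
        / ∏ i ∈ Icc 1 m1, (1 + α2 * q ^ (N + m2 + 1 + v2 + i - 1)) := by
        rw [gpmf_succ_eq_mul hq0.le hq1, show N + 1 + (m2 + v2) = N + m2 + 1 + v2 by omega]
        ring
    _ = α1 ^ m1 * qFall q ↑(N + m2 + v2 + m1) m1 * negQBinom q α1 (N + m2 + v2 + m1) v1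
        * (α2 ^ m2 * qFall q ↑(N + m2) m2 * (qFall q ↑(N + m2 + m1) m1
          / qFall q ↑(N + m2 + v2 + m1) m1 * negQBinom q α2 (N + m2 + m1) v2)) := by
        rw [qFallInv_mul_negQBinom hq0 hq1 hα1, qFallInv_mul_negQBinom hq0 hq1 hα2,
          mul_div_assoc, mul_div_assoc, negQBinom_div_prod hq0.le hq1 hα2,
          show N + (m2 + v2) = N + m2 + v2 by omega]
    _ = _ := by
        rw [hsplit, show N + (m1 + m2) = N + m2 + m1 by omega, gpmf_succ_eq_mul hq0.le hq1,
          show N + m2 + m1 + v2 = N + m2 + v2 + m1 by omega]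
        field_simp

end NegQTrinomial

theorem stmt8 (q : ℝ) (hq0 : 0 < q) (hq1 : q < 1) (n : ℕ) (hn : 1 ≤ n) (α1 α2 : ℝ)
    (hα1 : 0 < α1) (hα1' : α1 < 1) (hα2 : 0 < α2) (hα2' : α2 < 1) (m1 m2 : ℕ) :
    HasSum (fun w : ℕ × ℕ =>
        qFallInv q (w.1 : ℤ) m1 * qFallInv q (w.2 : ℤ) m2
          / (∏ i ∈ Finset.Icc 1 m1, (1 + α2 * q ^ (n + w.2 + i - 1)))
          * gpmf q α1 α2 n w.1 w.2)
      (α1 ^ m1 * α2 ^ m2 * qFall q ((n : ℤ) + (m1 : ℤ) + (m2 : ℤ) - 1) (m1 + m2)) := by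
  obtain ⟨N, rfl⟩ : ∃ N, n = N + 1 := ⟨n - 1, by omega⟩
  have hshift : Function.Injective fun v : ℕ × ℕ ↦ (m1 + v.1, m2 + v.2) := fun v w h ↦ by
    simp only [Prod.mk.injEq, Nat.add_left_cancel_iff] at h
    exact Prod.ext h.1 h.2
  refine (hshift.hasSum_iff fun w hw ↦ ?_).1 ?_
  · obtain h | h : w.1 < m1 ∨ w.2 < m2 := by
      by_contra! h
      exact hw ⟨(w.1 - m1, w.2 - m2), Prod.ext (by simp; omega) (by simp; omega)⟩
    · simp [qFallInv_natCast_of_lt h]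
    · simp [qFallInv_natCast_of_lt h]
  · have hsum := (hasSum_gpmf hq0.le hq1 hα1.le hα1' hα2.le hα2' (N + (m1 + m2))).mul_left
      (α1 ^ m1 * α2 ^ m2 * qFall q ↑(N + (m1 + m2)) (m1 + m2))
    rw [mul_one] at hsum
    rw [show ((N + 1 : ℕ) : ℤ) + m1 + m2 - 1 = ↑(N + (m1 + m2)) by push_cast; ring]
    exact hsum.congr_fun fun v ↦
      qFallInv_mul_qFallInv_div_prod_mul_gpmf hq0 hq1 hα1.le hα2.le N m1 m2 v.1 v.2
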